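/- arXiv:1312.2143 — 8 statements merged into one kernel-verified Lean document; each statement's English description precedes it below -/
import Mathlib

section
/- For every Boolean function f : F_2^n → F_2 and every affine subspace H ⊆ F_2^n on which f is constant, the minimum certificate complexity C_min[f] is at most the number of relevant coordinates of H, where coordinate i is relevant in H if there exists x with x ∈ H but x + e_i ∉ H. -/
open Finset

namespace Paper

/-- `f` is constant on the set `S`. -/
def ConstOn {n : ℕ} (f : (Fin n → ZMod 2) → ZMod 2) (S : Set (Fin n → ZMod 2)) : Prop :=
  ∃ c, ∀ y ∈ S, f y = c

/-- The subcube of points agreeing with `x` on the coordinates in `J`. -/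
def cube {n : ℕ} (J : Finset (Fin n)) (x : Fin n → ZMod 2) : Set (Fin n → ZMod 2) :=
  {y | ∀ i ∈ J, y i = x i}

/-- Certificate complexity of `f` at `x`. -/
noncomputable def C {n : ℕ} (f : (Fin n → ZMod 2) → ZMod 2) (x : Fin n → ZMod 2) : ℕ :=
  sInf {d | ∃ J : Finset (Fin n), J.card = d ∧ ConstOn f (cube J x)}

/-- Minimum certificate complexity of `f`. -/
noncomputable def Cmin {n : ℕ} (f : (Fin n → ZMod 2) → ZMod 2) : ℕ :=
  ⨅ x, C f x

/-- The affine subspace cut out by the parity constraints `⟨α j, ·⟩ = b j`. -/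
def affSol {n : ℕ} (d : ℕ) (α : Fin d → Fin n → ZMod 2) (b : Fin d → ZMod 2) :
    Set (Fin n → ZMod 2) :=
  {y | ∀ j, ∑ i, α j i * y i = b j}

/-- Parity certificate complexity of `f` at `x`. -/
noncomputable def pC {n : ℕ} (f : (Fin n → ZMod 2) → ZMod 2) (x : Fin n → ZMod 2) : ℕ :=
  sInf {d | ∃ (α : Fin d → Fin n → ZMod 2) (b : Fin d → ZMod 2),
    x ∈ affSol d α b ∧ ConstOn f (affSol d α b)}

/-- Minimum parity certificate complexity (parity kill number). -/
noncomputable def pCmin {n : ℕ} (f : (Fin n → ZMod 2) → ZMod 2) : ℕ := ⨅ x, pC f x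

/-- Maximum parity certificate complexity. -/
noncomputable def pCmax {n : ℕ} (f : (Fin n → ZMod 2) → ZMod 2) : ℕ := ⨆ x, pC f x

/-- Block composition `f ∘ g`. -/
def compose {n m : ℕ} (f : (Fin n → ZMod 2) → ZMod 2) (g : (Fin m → ZMod 2) → ZMod 2) :
    (Fin (m * n) → ZMod 2) → ZMod 2 :=
  fun y => f fun i => g fun j => y (finProdFinEquiv (j, i))

/-- The `k`-fold composition power of `f` (`power f k` agrees with `f^{∘k}` for `k ≥ 1`). -/
def power {n : ℕ} (f : (Fin n → ZMod 2) → ZMod 2) : (k : ℕ) → (Fin (n ^ k) → ZMod 2) → ZMod 2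
  | 0 => fun x => x (Fin.cast (pow_zero n).symm 0)
  | k + 1 => fun x => f fun i => power f k fun j =>
      x (Fin.cast (pow_succ n k).symm (finProdFinEquiv (j, i)))

/-- `f` is an affine function `x ↦ b ⊕ ⟨x, α⟩`. -/
def IsAffine {n : ℕ} (f : (Fin n → ZMod 2) → ZMod 2) : Prop :=
  ∃ (b : ZMod 2) (α : Fin n → ZMod 2), ∀ x, f x = b + ∑ i, α i * x i

/-- Parity decision trees on `n` input bits. -/
inductive PDT (n : ℕ) : Type
  | leaf : ZMod 2 → PDT n
  | node : (Fin n → ZMod 2) → PDT n → PDT n → PDT n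

/-- Evaluation of a parity decision tree. -/
def PDT.eval {n : ℕ} : PDT n → (Fin n → ZMod 2) → ZMod 2
  | .leaf b, _ => b
  | .node α t0 t1, x => if ∑ i, α i * x i = 0 then t0.eval x else t1.eval x

/-- Depth of a parity decision tree. -/
def PDT.depth {n : ℕ} : PDT n → ℕ
  | .leaf _ => 0
  | .node _ t0 t1 => max t0.depth t1.depth + 1

/-- Parity decision tree complexity of `f`. -/
noncomputable def DTp {n : ℕ} (f : (Fin n → ZMod 2) → ZMod 2) : ℕ :=
  sInf {d | ∃ T : PDT n, T.depth ≤ d ∧ ∀ x, T.eval x = f x}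

/-- Identify a bit with an element of `{-1, 1} ⊆ ℝ`. -/
noncomputable def toPM (b : Bool) : ℝ := if b then -1 else 1

/-- The Fourier coefficient `f̂(S)` of `f : {-1,1}^n → ℝ`. -/
noncomputable def fourier {n : ℕ} (f : (Fin n → Bool) → ℝ) (S : Finset (Fin n)) : ℝ :=
  (∑ x : Fin n → Bool, f x * ∏ i ∈ S, toPM (x i)) / 2 ^ n

open Classical in
/-- The Sort function as a real-valued function on `{-1,1}^4`. -/
noncomputable def sortR (x : Fin 4 → ℝ) : ℝ :=
  if (x 0 ≥ x 1 ∧ x 1 ≥ x 2 ∧ x 2 ≥ x 3) ∨ (x 0 ≤ x 1 ∧ x 1 ≤ x 2 ∧ x 2 ≤ x 3) then 1 else -1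

/-- The Sort function over `F_2` (ordering `0 < 1`). -/
def sortF (x : Fin 4 → ZMod 2) : ZMod 2 :=
  if ((x 1).val ≤ (x 0).val ∧ (x 2).val ≤ (x 1).val ∧ (x 3).val ≤ (x 2).val) ∨
     ((x 0).val ≤ (x 1).val ∧ (x 1).val ≤ (x 2).val ∧ (x 2).val ≤ (x 3).val) then 1 else 0

/-- if `f` is constant on a nonempty affine subspace `H`, then `Cmin f` is at
most the number of relevant coordinates of `H`. -/
theorem stmt0 {n d : ℕ} (f : (Fin n → ZMod 2) → ZMod 2)
    (α : Fin d → Fin n → ZMod 2) (b : Fin d → ZMod 2)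
    (hne : (affSol d α b).Nonempty) (hconst : ConstOn f (affSol d α b)) :
    Cmin f ≤ Set.ncard {i : Fin n | ∃ x ∈ affSol d α b, x + Pi.single i 1 ∉ affSol d α b} := by
  classical
  obtain ⟨x₀, hx₀⟩ := hne
  set R : Set (Fin n) := {i : Fin n | ∃ x ∈ affSol d α b, x + Pi.single i 1 ∉ affSol d α b}
    with hRdef
  have hRfin : R.Finite := Set.toFinite R
  set J : Finset (Fin n) := hRfin.toFinset with hJdef
  have key : ∀ (j : Fin d) (x : Fin n → ZMod 2) (i : Fin n),
      ∑ k, α j k * (x + (Pi.single i 1 : Fin n → ZMod 2)) k = (∑ k, α j k * x k) + α j i := by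
    intro j x i
    have : ∀ k, α j k * (x + (Pi.single i 1 : Fin n → ZMod 2)) k
        = α j k * x k + (if k = i then α j k else 0) := by
      intro k
      simp [Pi.single_apply, mul_add, mul_ite]
    simp only [this, Finset.sum_add_distrib, Finset.sum_ite_eq' Finset.univ i (fun k => α j k),
      Finset.mem_univ, if_true]
  -- irrelevant coordinates have α j i = 0 for all j
  have hirr : ∀ i ∉ J, ∀ j, α j i = 0 := by
    intro i hi j
    have hnotR : i ∉ R := fun h => hi (hRfin.mem_toFinset.mpr h)
    have : x₀ + Pi.single i 1 ∈ affSol d α b := by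
      by_contra h
      exact hnotR ⟨x₀, hx₀, h⟩
    have h1 := this j
    rw [key j x₀ i, hx₀ j] at h1
    exact (left_eq_add.mp h1.symm)
  have hsub : cube J x₀ ⊆ affSol d α b := by
    intro y hy j
    have : ∑ k, α j k * y k = ∑ k, α j k * x₀ k := by
      apply Finset.sum_congr rfl
      intro k _
      by_cases hk : k ∈ J
      · rw [hy k hk]
      · rw [hirr k hk j]; ring
    rw [affSol, Set.mem_setOf_eq] at *
    rw [this]; exact hx₀ j
  have hconstJ : ConstOn f (cube J x₀) := by
    obtain ⟨c, hc⟩ := hconst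
    exact ⟨c, fun y hy => hc y (hsub hy)⟩
  have h1 : Cmin f ≤ C f x₀ := ciInf_le (OrderBot.bddBelow _) x₀
  have h2 : C f x₀ ≤ J.card := Nat.sInf_le ⟨J, rfl, hconstJ⟩
  calc Cmin f ≤ J.card := h1.trans h2
    _ = R.ncard := by rw [hJdef, ← Set.ncard_eq_toFinset_card R hRfin]

end Paper
end

section
/- For every Boolean function f : F_2^n → F_2 and every integer k ≥ 1, C_min[f^{∘k}] ≥ C_min[f]^k, where f^{∘k} denotes the k-fold composition power of f. -/
/-!
A certificate `J` for `f ∘ g` at `x` fixes some coordinates in each of the `n` blocks. On a block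
where `J` fixes fewer than `Cmin g` coordinates, the value of `g` is not yet determined, so it can
be chosen freely; hence the blocks where `J` fixes at least `Cmin g` coordinates already form a
certificate for `f`, and there are at least `Cmin f` of them. Thus `|J| ≥ Cmin f * Cmin g`, and
the bound for powers follows by induction, starting from a dictator function (`Cmin = 1`).
-/

open Finset

namespace Paper

def toBlocks {ι κ μ α : Type*} (e : ι × κ ≃ μ) : (μ → α) ≃ (κ → ι → α) where
  toFun x i j := x (e (j, i))
  invFun X t := X (e.symm t).2 (e.symm t).1
  left_inv x := by ext t; simp
  right_inv X := by ext i j; simp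

def blockCoords {ι κ μ : Type*} [Fintype ι] [DecidableEq μ] (e : ι × κ ≃ μ)
    (J : Finset μ) (i : κ) : Finset ι :=
  univ.filter fun j => e (j, i) ∈ J

lemma sum_card_blockCoords {ι κ μ : Type*} [Fintype ι] [Fintype κ] [DecidableEq μ]
    (e : ι × κ ≃ μ) (J : Finset μ) : ∑ i, (blockCoords e J i).card = J.card := by
  calc ∑ i, (blockCoords e J i).card
      = ∑ p : ι × κ, if e p ∈ J then 1 else 0 := by
        simp only [blockCoords, card_filter, Fintype.sum_prod_type]
        exact sum_comm
    _ = (J.map e.symm.toEmbedding).card := by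
        rw [← card_filter]
        congr 1
        ext p
        simp
    _ = J.card := card_map _

section Certificates

variable {n : ℕ}

lemma mem_cube_iff_toBlocks {m M : ℕ} (e : Fin m × Fin n ≃ Fin M) (J : Finset (Fin M))
    (x y : Fin M → ZMod 2) :
    y ∈ cube J x ↔ ∀ i, toBlocks e y i ∈ cube (blockCoords e J i) (toBlocks e x i) := by
  refine ⟨fun hy i j hj => hy _ (mem_filter.1 hj).2, fun hy t ht => ?_⟩
  obtain ⟨⟨j, i⟩, rfl⟩ := e.surjective t
  exact hy i j (mem_filter.2 ⟨mem_univ j, ht⟩)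

lemma constOn_cube_univ (f : (Fin n → ZMod 2) → ZMod 2) (x : Fin n → ZMod 2) :
    ConstOn f (cube univ x) :=
  ⟨f x, fun _ hy => congrArg f (funext fun i => hy i (mem_univ i))⟩

lemma Cmin_le_card {f : (Fin n → ZMod 2) → ZMod 2} {x : Fin n → ZMod 2} {J : Finset (Fin n)}
    (h : ConstOn f (cube J x)) : Cmin f ≤ J.card :=
  (ciInf_le (OrderBot.bddBelow _) x).trans (Nat.sInf_le ⟨J, rfl, h⟩)

lemma le_Cmin {f : (Fin n → ZMod 2) → ZMod 2} {d : ℕ}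
    (h : ∀ x J, ConstOn f (cube J x) → d ≤ J.card) : d ≤ Cmin f :=
  le_ciInf fun x =>
    le_csInf ⟨_, univ, rfl, constOn_cube_univ f x⟩ fun _ ⟨J, hJ, hc⟩ => hJ ▸ h x J hc

lemma one_le_Cmin_of_apply_ne {f : (Fin n → ZMod 2) → ZMod 2} {y z : Fin n → ZMod 2}
    (h : f y ≠ f z) : 1 ≤ Cmin f := by
  refine le_Cmin fun x J ⟨c, hc⟩ => Nat.one_le_iff_ne_zero.2 fun hJ => h ?_
  have hfree : ∀ w, w ∈ cube J x := by simp [cube, card_eq_zero.1 hJ]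
  exact (hc y (hfree y)).trans (hc z (hfree z)).symm

lemma exists_mem_cube_apply_eq_of_card_lt_Cmin {f : (Fin n → ZMod 2) → ZMod 2}
    {x : Fin n → ZMod 2} {J : Finset (Fin n)} (hJ : J.card < Cmin f) (c : ZMod 2) :
    ∃ y ∈ cube J x, f y = c := by
  by_contra! h
  have flip : ∀ a b : ZMod 2, a ≠ b → a = b + 1 := by decide
  exact hJ.not_ge (Cmin_le_card ⟨c + 1, fun y hy => flip _ _ (h y hy)⟩)

theorem Cmin_mul_Cmin_le_Cmin_comp {m M : ℕ} (f : (Fin n → ZMod 2) → ZMod 2)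
    (g : (Fin m → ZMod 2) → ZMod 2) (e : Fin m × Fin n ≃ Fin M) :
    Cmin f * Cmin g ≤ Cmin fun x => f fun i => g (toBlocks e x i) := by
  classical
  refine le_Cmin fun x J ⟨c, hc⟩ => ?_
  set I := univ.filter fun i => Cmin g ≤ (blockCoords e J i).card
  have hI : ConstOn f (cube I fun i => g (toBlocks e x i)) := by
    refine ⟨c, fun w hw => ?_⟩
    have hblock : ∀ i, ∃ Y ∈ cube (blockCoords e J i) (toBlocks e x i), g Y = w i := by
      intro i
      by_cases hi : i ∈ I
      · exact ⟨_, fun _ _ => rfl, (hw i hi).symm⟩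
      · exact exists_mem_cube_apply_eq_of_card_lt_Cmin (by simpa [I] using hi) (w i)
    choose Y hYJ hYw using hblock
    have hy : (toBlocks e).symm Y ∈ cube J x :=
      (mem_cube_iff_toBlocks e J x _).2 fun i => by simpa using hYJ i
    simpa only [Equiv.apply_symm_apply, hYw] using hc _ hy
  calc Cmin f * Cmin g ≤ I.card * Cmin g := Nat.mul_le_mul_right _ (Cmin_le_card hI)
    _ = ∑ i ∈ I, Cmin g := by rw [sum_const, smul_eq_mul]
    _ ≤ ∑ i ∈ I, (blockCoords e J i).card := sum_le_sum fun i hi => (mem_filter.1 hi).2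
    _ ≤ ∑ i, (blockCoords e J i).card := sum_le_sum_of_subset (subset_univ I)
    _ = J.card := sum_card_blockCoords e J

end Certificates

theorem stmt3_general {n : ℕ} (f : (Fin n → ZMod 2) → ZMod 2) (k : ℕ) :
    Cmin f ^ k ≤ Cmin (power f k) := by
  induction k with
  | zero => exact one_le_Cmin_of_apply_ne (y := fun _ => 0) (z := fun _ => 1) (by simp [power])
  | succ k ih =>
    calc Cmin f ^ (k + 1) = Cmin f * Cmin f ^ k := pow_succ' _ _
      _ ≤ Cmin f * Cmin (power f k) := Nat.mul_le_mul_left _ ih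
      _ ≤ Cmin (power f (k + 1)) :=
        Cmin_mul_Cmin_le_Cmin_comp f (power f k)
          (finProdFinEquiv.trans (finCongr (pow_succ n k).symm))

/-- `Cmin` is supermultiplicative under composition powers. -/
theorem stmt3 {n : ℕ} (f : (Fin n → ZMod 2) → ZMod 2) (k : ℕ) (hk : 1 ≤ k) :
    Cmin f ^ k ≤ Cmin (power f k) :=
  stmt3_general f k

end Paper
end

section
/- For every Boolean function f : F_2^n → F_2 with f(0) = 0 and every integer k ≥ 1, C[f^{∘k}, 0] ≥ C[f, 0]^k, where C[g, x] is the certificate complexity of g at x. -/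
/-!
Induct on `k`; the step is `C[f, 0] * C[g, 0] ≤ C[f ∘ g, 0]` when `f 0 = 0` and `g 0 = 0`.
Let `J` certify `f ∘ g` at `0` and call a block heavy if `J` fixes at least `C[g, 0]` of its
coordinates. On a light block `J` does not certify `g`, so `g` takes both values on it; hence
every input `z` of `f` vanishing on the heavy blocks is realised inside the subcube, and
`f z = (f ∘ g) 0 = 0`. The heavy blocks thus certify `f` at `0`: there are at least `C[f, 0]`
of them, each carrying at least `C[g, 0]` coordinates of `J`.
-/

open Finset

namespace Paper

section Certificate

variable {n : ℕ} {g : (Fin n → ZMod 2) → ZMod 2} {x : Fin n → ZMod 2}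

lemma C_le_card {J : Finset (Fin n)} (h : ConstOn g (cube J x)) : C g x ≤ J.card :=
  Nat.sInf_le ⟨J, rfl, h⟩

lemma exists_card_eq_C_constOn :
    ∃ J : Finset (Fin n), J.card = C g x ∧ ConstOn g (cube J x) := by
  refine Nat.sInf_mem (s := {d | ∃ J : Finset (Fin n), J.card = d ∧ ConstOn g (cube J x)})
    ⟨_, univ, rfl, g x, fun y hy => ?_⟩
  rw [funext fun i => hy i (mem_univ i)]

lemma le_C {m : ℕ} (h : ∀ J : Finset (Fin n), ConstOn g (cube J x) → m ≤ J.card) :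
    m ≤ C g x := by
  obtain ⟨J, hJ, hconst⟩ := exists_card_eq_C_constOn (g := g) (x := x)
  exact hJ ▸ h J hconst

lemma C_pos_of_ne {y : Fin n → ZMod 2} (hy : g y ≠ g x) : 0 < C g x := by
  obtain ⟨J, hJ, c, hc⟩ := exists_card_eq_C_constOn (g := g) (x := x)
  refine Nat.pos_of_ne_zero fun h0 => hy ?_
  have hJ0 : J = ∅ := card_eq_zero.mp (hJ.trans h0)
  subst hJ0
  rw [hc y (by simp [cube]), hc x (by simp [cube])]

lemma exists_mem_cube_apply_eq_of_card_lt_C {J : Finset (Fin n)} (hJ : J.card < C g x)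
    (b : ZMod 2) : ∃ w ∈ cube J x, g w = b := by
  by_contra! hb
  refine hJ.not_ge (C_le_card ⟨b + 1, fun w hw => ?_⟩)
  have eq_add_one_of_ne : ∀ a b : ZMod 2, a ≠ b → a = b + 1 := by decide
  exact eq_add_one_of_ne _ _ (hb w hw)

end Certificate

section BlockComposition

variable {m n N : ℕ} (e : Fin m × Fin n ≃ Fin N)

def block (J : Finset (Fin N)) (i : Fin n) : Finset (Fin m) :=
  univ.filter fun j => e (j, i) ∈ J

lemma sum_card_block (J : Finset (Fin N)) :
    ∑ i, (block e J i).card = J.card := by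
  calc ∑ i, (block e J i).card = ∑ i, ∑ j, if e (j, i) ∈ J then 1 else 0 := by
        simp only [block, card_filter]
    _ = ∑ a, if a ∈ J then 1 else 0 :=
        (Fintype.sum_prod_type_right _).symm.trans (e.sum_comp fun a => if a ∈ J then 1 else 0)
    _ = J.card := by simp

variable {f : (Fin n → ZMod 2) → ZMod 2}
  {g : (Fin m → ZMod 2) → ZMod 2} {F : (Fin N → ZMod 2) → ZMod 2}

lemma constOn_cube_heavy_blocks (hF : ∀ x, F x = f fun i => g fun j => x (e (j, i)))
    (hf : f 0 = 0) (hg : g 0 = 0) {J : Finset (Fin N)} (hJ : ConstOn F (cube J 0)) :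
    ConstOn f (cube (univ.filter fun i => C g 0 ≤ (block e J i).card) 0) := by
  refine ⟨0, fun z hz => ?_⟩
  have hw : ∀ i, ∃ w ∈ cube (block e J i) 0, g w = z i := by
    intro i
    by_cases hi : C g 0 ≤ (block e J i).card
    · exact ⟨0, fun _ _ => rfl, hg.trans (hz i (mem_filter.mpr ⟨mem_univ i, hi⟩)).symm⟩
    · exact exists_mem_cube_apply_eq_of_card_lt_C (not_le.mp hi) (z i)
  choose w hwJ hwz using hw
  obtain ⟨c, hc⟩ := hJ
  have hc0 : c = 0 := by
    rw [← hc 0 fun _ _ => rfl, hF]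
    exact (congrArg f (funext fun _ => hg)).trans hf
  have hx : (fun a => w (e.symm a).2 (e.symm a).1) ∈ cube J 0 := by
    intro a ha
    apply hwJ
    simpa [block] using ha
  have hFx := hc _ hx
  simpa only [hF, Equiv.symm_apply_apply, hwz, hc0] using hFx

theorem C_mul_C_le_C_of_block (hF : ∀ x, F x = f fun i => g fun j => x (e (j, i)))
    (hf : f 0 = 0) (hg : g 0 = 0) : C f 0 * C g 0 ≤ C F 0 := by
  refine le_C fun J hJ => ?_
  set S := univ.filter fun i => C g 0 ≤ (block e J i).card
  calc C f 0 * C g 0 ≤ S.card * C g 0 :=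
        Nat.mul_le_mul_right _ (C_le_card (constOn_cube_heavy_blocks e hF hf hg hJ))
    _ = ∑ _i ∈ S, C g 0 := by rw [sum_const, smul_eq_mul]
    _ ≤ ∑ i ∈ S, (block e J i).card := sum_le_sum fun i hi => (mem_filter.mp hi).2
    _ ≤ ∑ i, (block e J i).card := sum_le_sum_of_subset (subset_univ S)
    _ = J.card := sum_card_block e J

end BlockComposition

lemma power_apply_zero {n : ℕ} {f : (Fin n → ZMod 2) → ZMod 2} (hf : f 0 = 0) :
    ∀ k, power f k 0 = 0
  | 0 => rfl
  | k + 1 => (congrArg f (funext fun _ => power_apply_zero hf k)).trans hf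

theorem stmt4_general {n : ℕ} (f : (Fin n → ZMod 2) → ZMod 2) (hf : f 0 = 0) (k : ℕ) :
    C f 0 ^ k ≤ C (power f k) 0 := by
  induction k with
  | zero => exact (pow_zero _).trans_le (C_pos_of_ne (y := fun _ => 1) one_ne_zero)
  | succ k ih =>
    calc C f 0 ^ (k + 1) = C f 0 * C f 0 ^ k := pow_succ' _ _
      _ ≤ C f 0 * C (power f k) 0 := Nat.mul_le_mul_left _ ih
      _ ≤ C (power f (k + 1)) 0 :=
        C_mul_C_le_C_of_block (finProdFinEquiv.trans (finCongr (pow_succ n k).symm))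
          (fun _ => rfl) hf (power_apply_zero hf k)

/-- `C[·, 0]` is supermultiplicative under composition powers when `f(0) = 0`. -/
theorem stmt4 {n : ℕ} (f : (Fin n → ZMod 2) → ZMod 2) (hf : f 0 = 0) (k : ℕ) (hk : 1 ≤ k) :
    C f 0 ^ k ≤ C (power f k) 0 :=
  stmt4_general f hf k

end Paper
end

section
/- Let f : F_2^n → F_2 and g : F_2^m → F_2 be Boolean functions with C^⊕_min[g] ≥ 2 (equivalently, g is not constant on any affine subspace of codimension ≤ 1). Then C^⊕_min[f ∘ g] ≥ C_min[f], where (f∘g)(y^{(1)},…,y^{(n)}) = f(g(y^{(1)}),…,g(y^{(n)})). -/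
open Finset

namespace Paper

/-!
Let `f ∘ g` be constant on `{Y | Φ Y = Φ Y₀}` with `Φ` linear of rank at most `d`, and split
`Y` into `n` blocks `y i` of `m` bits. Since `g` takes both values on every affine hyperplane,
one block can absorb one independent constraint whatever value of `g` it must produce: take two
preimages of that value that differ on the constraint and keep the one that cancels the error.
So if every quotient of the constraint space has dimension at most the number of blocks that it
sees (a linear Hall condition), every vector of `g`-values is realised on the subspace. If the
condition fails for some quotient, freeze the at most `codim` blocks that see it at `Y₀` and
recurse on a complementary set of constraints. The frozen blocks span a subcube of codimension
at most `d` on which `f` is constant.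
-/

open Module

section Lattice

variable {α : Type*} [Lattice α] [BoundedOrder α] [IsModularLattice α] [ComplementedLattice α]

theorem exists_inf_eq_sup_eq_top_of_le {a b : α} (h : a ≤ b) :
    ∃ c, a ≤ c ∧ b ⊓ c = a ∧ b ⊔ c = ⊤ := by
  obtain ⟨d, hd⟩ := exists_isCompl b
  refine ⟨a ⊔ d, le_sup_left, ?_, ?_⟩
  · rw [inf_comm, sup_inf_assoc_of_le d h, hd.symm.inf_eq_bot, sup_bot_eq]
  · exact top_le_iff.mp (hd.sup_eq_top ▸ sup_le_sup_left le_sup_right b)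

end Lattice

section Codimension

variable {K W : Type*} [DivisionRing K] [AddCommGroup W] [Module K W] [FiniteDimensional K W]

theorem finrank_quotient_eq_zero_iff {L : Submodule K W} : finrank K (W ⧸ L) = 0 ↔ L = ⊤ := by
  constructor
  · intro h
    apply Submodule.eq_top_of_finrank_eq
    have := L.finrank_quotient_add_finrank
    omega
  · rintro rfl
    have := (⊤ : Submodule K W).finrank_quotient_add_finrank
    rw [finrank_top] at this
    omega

theorem finrank_quotient_inf_of_sup_eq_top {L L' : Submodule K W} (h : L ⊔ L' = ⊤) :
    finrank K (W ⧸ L ⊓ L') = finrank K (W ⧸ L) + finrank K (W ⧸ L') := by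
  have hdim := Submodule.finrank_sup_add_finrank_inf_eq L L'
  rw [h, finrank_top] at hdim
  have := (L ⊓ L').finrank_quotient_add_finrank
  have := L.finrank_quotient_add_finrank
  have := L'.finrank_quotient_add_finrank
  omega

end Codimension

theorem mem_or_add_mem_of_mem_sup_span {W : Type*} [AddCommGroup W] [Module (ZMod 2) W]
    {L : Submodule (ZMod 2) W} {v w : W} (h : v ∈ L ⊔ (ZMod 2) ∙ w) :
    v ∈ L ∨ v + w ∈ L := by
  obtain ⟨l, hl, _, hw, rfl⟩ := Submodule.mem_sup.mp h
  obtain ⟨t, rfl⟩ := Submodule.mem_span_singleton.mp hw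
  have hww : w + w = 0 := by
    rw [← two_smul (ZMod 2), show (2 : ZMod 2) = 0 from rfl, zero_smul]
  rcases (by decide : ∀ t : ZMod 2, t = 0 ∨ t = 1) t with rfl | rfl
  · left
    simpa using hl
  · right
    rwa [one_smul, add_assoc, hww, add_zero]

section Blocks

variable {ι V W Z : Type*} [AddCommGroup V] [Module (ZMod 2) V]
  [AddCommGroup W] [Module (ZMod 2) W]

def SurjOnAffineHyperplanes (g : V → Z) : Prop :=
  ∀ φ : Module.Dual (ZMod 2) V, φ ≠ 0 → ∀ c z, ∃ u, φ u = c ∧ g u = z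

def Lifts (g : V → Z) (A : ι → V →ₗ[ZMod 2] W) (E : Finset ι) (L : Submodule (ZMod 2) W)
    (p : W) (z : ι → Z) : Prop :=
  ∃ y : ι → V, (∀ i, g (y i) = z i) ∧ ∑ i ∈ E, A i (y i) - p ∈ L

open Classical in
noncomputable def activeBlocks (A : ι → V →ₗ[ZMod 2] W) (E : Finset ι)
    (L : Submodule (ZMod 2) W) : Finset ι :=
  {i ∈ E | ¬ LinearMap.range (A i) ≤ L}

def HallCondition (A : ι → V →ₗ[ZMod 2] W) (E : Finset ι) (L : Submodule (ZMod 2) W) :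
    Prop :=
  ∀ L', L ≤ L' → finrank (ZMod 2) (W ⧸ L') ≤ #(activeBlocks A E L')

variable {g : V → Z} {A : ι → V →ₗ[ZMod 2] W} {E K : Finset ι}
  {L L' L'' : Submodule (ZMod 2) W} {p : W} {z : ι → Z}

theorem mem_activeBlocks {i : ι} :
    i ∈ activeBlocks A E L ↔ i ∈ E ∧ ¬ LinearMap.range (A i) ≤ L := by
  simp [activeBlocks]

theorem activeBlocks_subset : activeBlocks A E L ⊆ E := fun _ hi => (mem_activeBlocks.mp hi).1

theorem sum_mem_of_range_le (h : ∀ i ∈ E, LinearMap.range (A i) ≤ L) (y : ι → V) :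
    ∑ i ∈ E, A i (y i) ∈ L :=
  Submodule.sum_mem _ fun i hi => h i hi (LinearMap.mem_range_self _ _)

theorem SurjOnAffineHyperplanes.exists_pair (hg : SurjOnAffineHyperplanes g)
    {ψ : V →ₗ[ZMod 2] W} (hψ : ¬ LinearMap.range ψ ≤ L) (z : Z) :
    ∃ u₁ u₂, g u₁ = z ∧ g u₂ = z ∧ ψ u₂ - ψ u₁ ∉ L := by
  obtain ⟨_, ⟨v, rfl⟩, hv⟩ := Set.not_subset.mp hψ
  obtain ⟨χ, hχv, hχL⟩ := Submodule.exists_dual_map_eq_bot_of_notMem hv inferInstance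
  have hφ : χ ∘ₗ ψ ≠ 0 := fun h => hχv (LinearMap.congr_fun h v)
  obtain ⟨u₁, h₁, hg₁⟩ := hg _ hφ 0 z
  obtain ⟨u₂, h₂, hg₂⟩ := hg _ hφ 1 z
  refine ⟨u₁, u₂, hg₁, hg₂, fun hmem => ?_⟩
  have := Submodule.mem_map_of_mem (f := χ) hmem
  rw [hχL, Submodule.mem_bot, map_sub] at this
  simp_all

theorem lifts_top (hg : Function.Surjective g) : Lifts g A E ⊤ p z := by
  choose y hy using fun i => hg (z i)
  exact ⟨y, hy, Submodule.mem_top⟩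

theorem HallCondition.active (h : HallCondition A E L) (hL : L ≤ L') :
    HallCondition A (activeBlocks A E L') L' := by
  intro M hM
  refine (h M (hL.trans hM)).trans (card_le_card fun i hi => ?_)
  rw [mem_activeBlocks] at hi ⊢
  exact ⟨mem_activeBlocks.mpr ⟨hi.1, fun h' => hi.2 (h'.trans hM)⟩, hi.2⟩

theorem HallCondition.of_lt [FiniteDimensional (ZMod 2) W]
    (h : ∀ M, L ≤ M → M ≠ ⊤ → finrank (ZMod 2) (W ⧸ M) < #(activeBlocks A E M)) :
    HallCondition A E L := by
  intro M hM
  by_cases htop : M = ⊤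
  · rw [finrank_quotient_eq_zero_iff.mpr htop]
    exact Nat.zero_le _
  · exact (h M hM htop).le

variable [DecidableEq ι]

theorem range_le_of_mem_sdiff_activeBlocks {i : ι} (hi : i ∈ E \ activeBlocks A E L) :
    LinearMap.range (A i) ≤ L := by
  rw [mem_sdiff, mem_activeBlocks] at hi
  tauto

theorem sum_apply_piecewise (hK : K ⊆ E) (y y' : ι → V) :
    ∑ i ∈ E, A i (K.piecewise y y' i) =
      ∑ i ∈ K, A i (y i) + ∑ i ∈ E \ K, A i (y' i) := by
  rw [← sum_sdiff hK, add_comm]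
  congr 1 <;> refine sum_congr rfl fun i hi => ?_
  · rw [K.piecewise_eq_of_mem _ _ hi]
  · rw [K.piecewise_eq_of_notMem _ _ (mem_sdiff.mp hi).2]

theorem Lifts.piecewise (hK : K ⊆ E) (hout : ∀ i ∈ E \ K, LinearMap.range (A i) ≤ L')
    (h' : Lifts g A K L' p z) (h'' : ∀ q, Lifts g A (E \ K) L'' q z) :
    Lifts g A E (L' ⊓ L'') p z := by
  obtain ⟨y', hy'g, hy'⟩ := h'
  obtain ⟨y'', hy''g, hy''⟩ := h'' (p - ∑ i ∈ K, A i (y' i))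
  refine ⟨K.piecewise y' y'', fun i => ?_, ?_⟩
  · by_cases hi : i ∈ K <;> simp [hi, hy'g, hy''g]
  · rw [sum_apply_piecewise hK]
    refine Submodule.mem_inf.mpr ⟨?_, ?_⟩
    · convert L'.add_mem hy' (sum_mem_of_range_le hout y'') using 1
      abel
    · convert hy'' using 1
      abel

theorem Lifts.freeze (hK : K ⊆ E) (hout : ∀ i ∈ E \ K, LinearMap.range (A i) ≤ L')
    {y₀ : ι → V} (hy₀ : ∀ i ∈ K, g (y₀ i) = z i) {z' : ι → Z}
    (hz' : ∀ i ∉ K, z' i = z i)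
    (h : Lifts g A (E \ K) L'' (∑ i ∈ E \ K, A i (y₀ i)) z') :
    Lifts g A E (L' ⊓ L'') (∑ i ∈ E, A i (y₀ i)) z := by
  obtain ⟨y, hyg, hy⟩ := h
  refine ⟨K.piecewise y₀ y, fun i => ?_, ?_⟩
  · by_cases hi : i ∈ K
    · rw [K.piecewise_eq_of_mem _ _ hi, hy₀ i hi]
    · rw [K.piecewise_eq_of_notMem _ _ hi, hyg, hz' i hi]
  · rw [sum_apply_piecewise hK, ← sum_sdiff hK (f := fun i => A i (y₀ i))]
    refine Submodule.mem_inf.mpr ⟨?_, ?_⟩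
    · convert L'.sub_mem (sum_mem_of_range_le hout y) (sum_mem_of_range_le hout y₀) using 1
      abel
    · convert hy using 1
      abel

theorem lifts_of_lifts_erase (hg : SurjOnAffineHyperplanes g) {i : ι} (hi : i ∈ E)
    (hA : ¬ LinearMap.range (A i) ≤ L)
    (h : ∀ w ∉ L, ∀ q, Lifts g A (E.erase i) (L ⊔ (ZMod 2) ∙ w) q z) :
    Lifts g A E L p z := by
  obtain ⟨u₁, u₂, hu₁, hu₂, hw⟩ := hg.exists_pair hA (z i)
  obtain ⟨y, hyg, hy⟩ := h _ hw (p - A i u₁)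
  -- Both candidates for block `i` carry the value `z i`; they differ by `w` under `A i`, so one
  -- of them cancels the component of the error along `w`.
  obtain ⟨u, hu, hmem⟩ :
      ∃ u, g u = z i ∧ A i u + ∑ j ∈ E.erase i, A j (y j) - p ∈ L := by
    rcases mem_or_add_mem_of_mem_sup_span hy with h₁ | h₂
    · exact ⟨u₁, hu₁, by convert h₁ using 1; abel⟩
    · exact ⟨u₂, hu₂, by convert h₂ using 1; abel⟩
  refine ⟨Function.update y i u, fun j => ?_, ?_⟩
  · by_cases hj : j = i
    · subst hj
      simpa using hu
    · simpa [hj] using hyg j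
  · rw [← add_sum_erase E _ hi, Function.update_self]
    convert hmem using 3
    exact sum_congr rfl fun j hj => by rw [Function.update_of_ne (ne_of_mem_erase hj)]

variable [FiniteDimensional (ZMod 2) W]

theorem HallCondition.sdiff_active (h : HallCondition A E L)
    (hcard : #(activeBlocks A E L') ≤ finrank (ZMod 2) (W ⧸ L')) (hinf : L' ⊓ L'' = L)
    (hsup : L' ⊔ L'' = ⊤) : HallCondition A (E \ activeBlocks A E L') L'' := by
  intro M hM
  have hcodim := finrank_quotient_inf_of_sup_eq_top
    (top_le_iff.mp (hsup ▸ sup_le_sup_left hM L'))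
  have hHall := h (L' ⊓ M) (hinf ▸ inf_le_inf_left L' hM)
  have hsub : activeBlocks A E (L' ⊓ M) ⊆
      activeBlocks A E L' ∪ activeBlocks A (E \ activeBlocks A E L') M := by
    intro i hi
    simp only [mem_union, mem_activeBlocks, mem_sdiff, le_inf_iff] at hi ⊢
    tauto
  have := (card_le_card hsub).trans (card_union_le _ _)
  omega

theorem HallCondition.erase
    (h : ∀ M, L < M → M ≠ ⊤ → finrank (ZMod 2) (W ⧸ M) < #(activeBlocks A E M))
    {w : W} (hw : w ∉ L) (i : ι) : HallCondition A (E.erase i) (L ⊔ (ZMod 2) ∙ w) := by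
  intro M hM
  by_cases htop : M = ⊤
  · rw [finrank_quotient_eq_zero_iff.mpr htop]
    exact Nat.zero_le _
  have hlt : L < M :=
    (left_lt_sup.mpr (by rwa [Submodule.span_singleton_le_iff_mem])).trans_le hM
  have herase : activeBlocks A (E.erase i) M = (activeBlocks A E M).erase i := by
    ext j
    simp only [mem_activeBlocks, mem_erase]
    tauto
  have := h M hlt htop
  have := pred_card_le_card_erase (s := activeBlocks A E M) (a := i)
  rw [herase]
  omega

theorem lifts_of_hallCondition (hsurj : Function.Surjective g)
    (hslice : SurjOnAffineHyperplanes g) (h : HallCondition A E L) (p : W) (z : ι → Z) :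
    Lifts g A E L p z := by
  induction hL : finrank (ZMod 2) (W ⧸ L) using Nat.strong_induction_on generalizing L E p with
  | _ k IH =>
  by_cases htop : L = ⊤
  · subst htop
    exact lifts_top hsurj
  by_cases htight :
      ∃ L', L < L' ∧ L' ≠ ⊤ ∧ #(activeBlocks A E L') ≤ finrank (ZMod 2) (W ⧸ L')
  · obtain ⟨L', hlt, hne, hcard⟩ := htight
    obtain ⟨L'', -, hinf, hsup⟩ := exists_inf_eq_sup_eq_top_of_le hlt.le
    have hcodim := finrank_quotient_inf_of_sup_eq_top hsup
    have hne'' : L'' ≠ ⊤ := by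
      rintro rfl
      exact hlt.ne' (inf_top_eq L' ▸ hinf)
    rw [hinf] at hcodim
    have := finrank_quotient_eq_zero_iff.not.mpr hne
    have := finrank_quotient_eq_zero_iff.not.mpr hne''
    rw [← hinf]
    exact Lifts.piecewise activeBlocks_subset (fun i => range_le_of_mem_sdiff_activeBlocks)
      (IH _ (by omega) (h.active hlt.le) _ rfl)
      (fun q => IH _ (by omega) (h.sdiff_active hcard hinf hsup) q rfl)
  · push Not at htight
    have := finrank_quotient_eq_zero_iff.not.mpr htop
    obtain ⟨i, hi⟩ : (activeBlocks A E L).Nonempty := card_pos.mp (by have := h L le_rfl; omega)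
    rw [mem_activeBlocks] at hi
    refine lifts_of_lifts_erase hslice hi.1 hi.2 fun w hw q =>
      IH _ ?_ (HallCondition.erase htight hw i) q rfl
    have := LinearEquiv.finrank_quotient_sup_span_singleton hw
    omega

theorem exists_cube_lifts (hsurj : Function.Surjective g) (hslice : SurjOnAffineHyperplanes g)
    (A : ι → V →ₗ[ZMod 2] W) (y₀ : ι → V) (L : Submodule (ZMod 2) W) (E : Finset ι) :
    ∃ (J : Finset ι) (x : ι → Z), #J ≤ finrank (ZMod 2) (W ⧸ L) ∧
      ∀ z : ι → Z, (∀ i ∈ J, z i = x i) →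
        Lifts g A E L (∑ i ∈ E, A i (y₀ i)) z := by
  induction hL : finrank (ZMod 2) (W ⧸ L) using Nat.strong_induction_on generalizing L E with
  | _ k IH =>
  by_cases htight :
      ∃ L', L ≤ L' ∧ L' ≠ ⊤ ∧ #(activeBlocks A E L') ≤ finrank (ZMod 2) (W ⧸ L')
  · obtain ⟨L', hle, hne, hcard⟩ := htight
    obtain ⟨L'', -, hinf, hsup⟩ := exists_inf_eq_sup_eq_top_of_le hle
    have hcodim := finrank_quotient_inf_of_sup_eq_top hsup
    rw [hinf] at hcodim
    have := finrank_quotient_eq_zero_iff.not.mpr hne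
    set K := activeBlocks A E L'
    obtain ⟨J, x, hJ, hx⟩ := IH _ (by omega) L'' (E \ K) rfl
    refine ⟨K ∪ J, K.piecewise (fun i => g (y₀ i)) x, (card_union_le _ _).trans (by omega),
      fun z hz => ?_⟩
    rw [← hinf]
    refine Lifts.freeze activeBlocks_subset (fun i => range_le_of_mem_sdiff_activeBlocks)
      (fun i hi => ?_) (z' := K.piecewise x z) (fun i hi => K.piecewise_eq_of_notMem _ _ hi)
      (hx _ fun i hi => ?_)
    · rw [hz i (mem_union_left J hi), K.piecewise_eq_of_mem _ _ hi]
    · by_cases hiK : i ∈ K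
      · exact K.piecewise_eq_of_mem _ _ hiK
      · rw [K.piecewise_eq_of_notMem _ _ hiK, hz i (mem_union_right K hi),
          K.piecewise_eq_of_notMem _ _ hiK]
  · push Not at htight
    exact ⟨∅, fun i => g (y₀ i), Nat.zero_le _,
      fun z _ => lifts_of_hallCondition hsurj hslice (HallCondition.of_lt htight) _ z⟩

theorem exists_cube_forall_exists_map_eq [Fintype ι] (hsurj : Function.Surjective g)
    (hslice : SurjOnAffineHyperplanes g) (Φ : (ι → V) →ₗ[ZMod 2] W) (y₀ : ι → V) :
    ∃ (J : Finset ι) (x : ι → Z), #J ≤ finrank (ZMod 2) W ∧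
      ∀ z : ι → Z, (∀ i ∈ J, z i = x i) →
        ∃ y, (∀ i, g (y i) = z i) ∧ Φ y = Φ y₀ := by
  have hΦ : ∀ y, Φ y = ∑ i, Φ (Pi.single i (y i)) := fun y => by
    rw [← map_sum, univ_sum_single]
  obtain ⟨J, x, hJ, hx⟩ :=
    exists_cube_lifts hsurj hslice (fun i => Φ ∘ₗ LinearMap.single (ZMod 2) (fun _ => V) i)
      y₀ ⊥ univ
  refine ⟨J, x, hJ.trans (Submodule.finrank_quotient_le ⊥), fun z hz => ?_⟩
  obtain ⟨y, hyg, hy⟩ := hx z hz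
  refine ⟨y, hyg, ?_⟩
  rw [hΦ y, hΦ y₀, ← sub_eq_zero]
  simpa using hy

end Blocks

section ParityCertificates

theorem constOn_of_forall_ne {N : ℕ} {f : (Fin N → ZMod 2) → ZMod 2}
    {S : Set (Fin N → ZMod 2)} {v : ZMod 2} (h : ∀ y ∈ S, f y ≠ v) : ConstOn f S :=
  have key : ∀ a v : ZMod 2, a ≠ v → a = v + 1 := by decide
  ⟨v + 1, fun y hy => key _ _ (h y hy)⟩

theorem pCmin_le_of_constOn {N d : ℕ} {f : (Fin N → ZMod 2) → ZMod 2}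
    {α : Fin d → Fin N → ZMod 2} {b : Fin d → ZMod 2} {x : Fin N → ZMod 2}
    (hx : x ∈ affSol d α b) (hf : ConstOn f (affSol d α b)) : pCmin f ≤ d :=
  (ciInf_le' _ x).trans (Nat.sInf_le ⟨α, b, hx, hf⟩)

theorem exists_affSol_pCmin {N : ℕ} (f : (Fin N → ZMod 2) → ZMod 2) :
    ∃ (α : Fin (pCmin f) → Fin N → ZMod 2) (b : Fin (pCmin f) → ZMod 2),
      ∃ x ∈ affSol (pCmin f) α b, ConstOn f (affSol (pCmin f) α b) := by
  obtain ⟨x, hx⟩ := ciInf_mem (pC f)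
  have hpoint : ∀ y, y ∈ affSol N (fun j => Pi.single j 1) x ↔ y = x := fun y => by
    simp [affSol, Pi.single_apply, funext_iff]
  obtain ⟨α, b, hxα, hf⟩ :=
    Nat.sInf_mem (s := {d | ∃ α b, x ∈ affSol d α b ∧ ConstOn f (affSol d α b)})
      ⟨N, _, x, (hpoint x).mpr rfl, f x, fun y hy => by rw [(hpoint y).mp hy]⟩
  rw [pCmin, ← hx]
  exact ⟨α, b, x, hxα, hf⟩

variable {m : ℕ} {g : (Fin m → ZMod 2) → ZMod 2}

theorem surjective_of_one_le_pCmin (hg : 1 ≤ pCmin g) : Function.Surjective g := by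
  intro v
  by_contra! hv
  have := pCmin_le_of_constOn (α := ![]) (b := ![]) (x := 0) (fun j => j.elim0)
    (constOn_of_forall_ne fun y _ => hv y)
  omega

theorem surjOnAffineHyperplanes_of_two_le_pCmin (hg : 2 ≤ pCmin g) :
    SurjOnAffineHyperplanes g := by
  intro φ hφ c v
  by_contra! hv
  obtain ⟨u, hu⟩ : ∃ u, φ u ≠ 0 := by
    by_contra! h
    exact hφ (LinearMap.ext h)
  have hhyperplane : ∀ y,
      y ∈ affSol 1 (fun _ k => φ (fun j => if k = j then 1 else 0)) ![c] ↔ φ y = c := by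
    intro y
    simp [affSol, LinearMap.pi_apply_eq_sum_univ φ y, mul_comm]
  have hφu : φ (c • u) = c := by
    have key : ∀ a : ZMod 2, a ≠ 0 → a = 1 := by decide
    rw [map_smul, smul_eq_mul, key _ hu, mul_one]
  have := pCmin_le_of_constOn ((hhyperplane _).mpr hφu)
    (constOn_of_forall_ne fun y hy => hv y ((hhyperplane y).mp hy))
  omega

end ParityCertificates

def blockFlatten {R : Type*} [Semiring R] {n m : ℕ} :
    (Fin n → Fin m → R) →ₗ[R] (Fin (m * n) → R) where
  toFun y t := y (finProdFinEquiv.symm t).2 (finProdFinEquiv.symm t).1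
  map_add' _ _ := rfl
  map_smul' _ _ := rfl

theorem blockFlatten_apply_finProdFinEquiv {R : Type*} [Semiring R] {n m : ℕ}
    (y : Fin n → Fin m → R) (k : Fin m) (i : Fin n) :
    blockFlatten y (finProdFinEquiv (k, i)) = y i k := by
  simp only [blockFlatten, LinearMap.coe_mk, AddHom.coe_mk, Equiv.symm_apply_apply]

theorem blockFlatten_apply_symm {R : Type*} [Semiring R] {n m : ℕ} (Y : Fin (m * n) → R) :
    blockFlatten (fun i k => Y (finProdFinEquiv (k, i))) = Y := by
  ext t
  simp only [blockFlatten, LinearMap.coe_mk, AddHom.coe_mk, Prod.mk.eta,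
    Equiv.apply_symm_apply]

theorem compose_blockFlatten {n m : ℕ} (f : (Fin n → ZMod 2) → ZMod 2)
    (g : (Fin m → ZMod 2) → ZMod 2) (y : Fin n → Fin m → ZMod 2) :
    compose f g (blockFlatten y) = f fun i => g (y i) := by
  simp only [compose, blockFlatten_apply_finProdFinEquiv]

theorem mem_affSol_iff_mulVec {N d : ℕ} {α : Fin d → Fin N → ZMod 2} {b : Fin d → ZMod 2}
    {x : Fin N → ZMod 2} : x ∈ affSol d α b ↔ Matrix.mulVec α x = b := by
  simp [affSol, funext_iff, Matrix.mulVec, dotProduct]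

/-- if `C⊕_min[g] ≥ 2` then `C⊕_min[f ∘ g] ≥ C_min[f]`. -/
theorem stmt7 {n m : ℕ} (f : (Fin n → ZMod 2) → ZMod 2) (g : (Fin m → ZMod 2) → ZMod 2)
    (hg : 2 ≤ pCmin g) :
    Cmin f ≤ pCmin (compose f g) := by
  obtain ⟨α, b, Y₀, hY₀, c, hc⟩ := exists_affSol_pCmin (compose f g)
  obtain ⟨J, x, hJ, hlift⟩ := exists_cube_forall_exists_map_eq
    (surjective_of_one_le_pCmin (one_le_two.trans hg))
    (surjOnAffineHyperplanes_of_two_le_pCmin hg)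
    (Matrix.mulVecLin α ∘ₗ blockFlatten) fun i k => Y₀ (finProdFinEquiv (k, i))
  have hcube : ConstOn f (cube J x) := ⟨c, fun z hz => by
    obtain ⟨y, hyg, hy⟩ := hlift z hz
    have hmem : blockFlatten y ∈ affSol _ α b := by
      rw [mem_affSol_iff_mulVec] at hY₀ ⊢
      rw [← hY₀, ← blockFlatten_apply_symm Y₀]
      exact hy
    simpa [compose_blockFlatten, hyg] using hc _ hmem⟩
  calc Cmin f ≤ C f x := ciInf_le' _ x
    _ ≤ #J := Nat.sInf_le ⟨J, rfl, hcube⟩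
    _ ≤ pCmin (compose f g) := by simpa using hJ

end Paper
end

section
/- Suppose f : F_2^n → F_2 is not an affine function (i.e., not of the form x ↦ b ⊕ ⟨x, α⟩) and C_min[f] ≥ 2. Then C^⊕_min[f ∘ f] ≥ 2; that is, f ∘ f is not constant on any affine subspace of F_2^{n^2} of codimension at most 1. -/
open Finset

namespace Paper

section Aux

lemma zne : ∀ a b : ZMod 2, a ≠ b → a = b + 1 := by decide

lemma zcases : ∀ a b : ZMod 2, a = b ∨ a = b + 1 := by decide

lemma zsucc_ne : ∀ a : ZMod 2, a + 1 ≠ a := by decide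

variable {n : ℕ} {f : (Fin n → ZMod 2) → ZMod 2}

lemma hCx (h2 : 2 ≤ Cmin f) (x : Fin n → ZMod 2) : 2 ≤ C f x :=
  le_trans h2 (ciInf_le (OrderBot.bddBelow _) x)

lemma not_const_cube (h2 : 2 ≤ Cmin f) {J : Finset (Fin n)} (hJ : J.card ≤ 1)
    (x : Fin n → ZMod 2) : ¬ ConstOn f (cube J x) := fun hc => by
  have h3 : C f x ≤ J.card := Nat.sInf_le ⟨J, rfl, hc⟩
  have := hCx h2 x; omega

lemma L1 (h2 : 2 ≤ Cmin f) (c : ZMod 2) : ∃ v, f v = c := by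
  by_contra h
  push_neg at h
  apply not_const_cube h2 (J := ∅) (by simp) (fun _ => 0)
  exact ⟨c + 1, fun y _ => zne _ _ (h y)⟩

lemma L2 (h2 : 2 ≤ Cmin f) (k : Fin n) (s c : ZMod 2) : ∃ v, v k = s ∧ f v = c := by
  by_contra h
  push_neg at h
  apply not_const_cube h2 (J := {k}) (by simp) (fun _ => s)
  refine ⟨c + 1, fun y hy => zne _ _ (h y (hy k (Finset.mem_singleton_self k)))⟩

lemma npos (h2 : 2 ≤ Cmin f) : 0 < n := by
  by_contra hn
  push_neg at hn
  interval_cases n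
  obtain ⟨v, hv⟩ := L1 h2 0
  obtain ⟨w, hw⟩ := L1 h2 1
  have : v = w := funext fun i => i.elim0
  rw [this, hw] at hv
  exact (by decide : (1 : ZMod 2) ≠ 0) hv

lemma psolve {β : Fin n → ZMod 2} (hb : β ≠ 0) (q : ZMod 2) :
    ∃ v : Fin n → ZMod 2, ∑ j, β j * v j = q := by
  obtain ⟨j₀, hj₀⟩ := Function.ne_iff.mp hb
  have hb1 : β j₀ = 1 := by
    have := zne (β j₀) 0 hj₀; simpa using this
  refine ⟨fun j => if j = j₀ then q else 0, ?_⟩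
  have : ∀ j, β j * (if j = j₀ then q else 0) = if j = j₀ then β j * q else 0 := by
    intro j; split <;> simp
  rw [Finset.sum_congr rfl (fun j _ => this j), Finset.sum_ite_eq' Finset.univ j₀]
  simp [hb1]

lemma dichot (h1 : ¬ IsAffine f) (h2 : 2 ≤ Cmin f) (β : Fin n → ZMod 2) (_hβ : β ≠ 0) :
    (∀ c q, ∃ v, f v = c ∧ ∑ j, β j * v j = q) ∨
    (∃ d e : ZMod 2, (∀ v, (∑ j, β j * v j) = d → f v = e) ∧
      (∀ c, ∃ v, (∑ j, β j * v j) = d + 1 ∧ f v = c)) := by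
  by_cases h : ∀ c q, ∃ v, f v = c ∧ ∑ j, β j * v j = q
  · exact Or.inl h
  · right
    push_neg at h
    obtain ⟨c, q, hcq⟩ := h
    have hconst : ∀ v, (∑ j, β j * v j) = q → f v = c + 1 := by
      intro v hv
      exact zne _ _ (fun hfc => (hcq v hfc) hv)
    refine ⟨q, c + 1, hconst, ?_⟩
    intro c'
    by_contra hno
    push_neg at hno
    have hconst' : ∀ v, (∑ j, β j * v j) = q + 1 → f v = c' + 1 := by
      intro v hv
      exact zne _ _ (fun hfc => (hno v) hv hfc)
    rcases zcases (c' + 1) (c + 1) with he | he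
    · -- f constant c+1 everywhere
      obtain ⟨v, hv⟩ := L1 h2 (c + 1 + 1)
      have : f v = c + 1 := by
        rcases zcases (∑ j, β j * v j) q with hq | hq
        · exact hconst v hq
        · rw [hconst' v hq, he]
      rw [hv] at this
      exact zsucc_ne (c + 1) this
    · -- f is affine
      apply h1
      refine ⟨c + 1 + q, β, fun v => ?_⟩
      rcases zcases (∑ j, β j * v j) q with hq | hq
      · rw [hconst v hq, hq]
        have : ∀ a b : ZMod 2, a = a + b + b := by decide
        exact this _ _
      · rw [hconst' v hq, hq, he]
        have : ∀ a b : ZMod 2, a + 1 + 1 = a + b + (b + 1) + 1 := by decide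
        have h4 := this c q
        linear_combination h4

end Aux

section Blocks

variable {n : ℕ}

/-- The parity vector of block `i`. -/
def blkA (α : Fin (n * n) → ZMod 2) (i : Fin n) : Fin n → ZMod 2 :=
  fun j => α (finProdFinEquiv (j, i))

/-- The parity of block `i` applied to a block input. -/
def blkP (α : Fin (n * n) → ZMod 2) (i : Fin n) (v : Fin n → ZMod 2) : ZMod 2 :=
  ∑ j, blkA α i j * v j

/-- Assemble a point of the big cube from blocks. -/
def mkBlocks (u : Fin n → Fin n → ZMod 2) : Fin (n * n) → ZMod 2 :=
  fun m => u (finProdFinEquiv.symm m).2 (finProdFinEquiv.symm m).1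

lemma mkBlocks_apply (u : Fin n → Fin n → ZMod 2) (j i : Fin n) :
    mkBlocks u (finProdFinEquiv (j, i)) = u i j := by
  simp [mkBlocks]

lemma sum_blocks (α : Fin (n * n) → ZMod 2) (y : Fin (n * n) → ZMod 2) :
    ∑ m, α m * y m = ∑ i, blkP α i (fun j => y (finProdFinEquiv (j, i))) := by
  rw [← Equiv.sum_comp (finProdFinEquiv : Fin n × Fin n ≃ Fin (n * n))
    (fun m => α m * y m), Fintype.sum_prod_type, Finset.sum_comm]
  rfl

lemma sum_mkBlocks (α : Fin (n * n) → ZMod 2) (u : Fin n → Fin n → ZMod 2) :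
    ∑ m, α m * mkBlocks u m = ∑ i, blkP α i (u i) := by
  rw [sum_blocks]
  refine Finset.sum_congr rfl fun i _ => ?_
  congr 1
  funext j
  exact mkBlocks_apply u j i

lemma compose_mkBlocks (f : (Fin n → ZMod 2) → ZMod 2) (u : Fin n → Fin n → ZMod 2) :
    compose f f (mkBlocks u) = f fun i => f (u i) := by
  unfold compose
  congr 1
  funext i
  congr 1
  funext j
  exact mkBlocks_apply u j i

end Blocks

section Core

variable {n : ℕ} {f : (Fin n → ZMod 2) → ZMod 2}

lemma core (h1 : ¬ IsAffine f) (h2 : 2 ≤ Cmin f)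
    (α : Fin (n * n) → ZMod 2) (b : ZMod 2)
    (hw : ∃ y0 : Fin (n * n) → ZMod 2, ∑ m, α m * y0 m = b) :
    ∃ (k₀ : Fin n) (e₀ : ZMod 2), ∀ z : Fin n → ZMod 2, z k₀ = e₀ →
      ∃ u : Fin n → Fin n → ZMod 2, (∀ i, f (u i) = z i) ∧ ∑ i, blkP α i (u i) = b := by
  classical
  have hn : 0 < n := npos h2
  choose V hV using L1 h2
  by_cases hA : ∃ k₀, blkA α k₀ ≠ 0 ∧ ∀ c q, ∃ v, f v = c ∧ blkP α k₀ v = q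
  · obtain ⟨k₀, -, hsurj⟩ := hA
    choose W hW1 hW2 using hsurj
    refine ⟨k₀, 0, fun z _ => ?_⟩
    set r : ZMod 2 := b - ∑ k ∈ Finset.univ.erase k₀, blkP α k (V (z k)) with hr
    set u : Fin n → Fin n → ZMod 2 :=
      Function.update (fun k => V (z k)) k₀ (W (z k₀) r) with hu
    refine ⟨u, ?_, ?_⟩
    · intro i
      by_cases hik : i = k₀
      · subst hik; simp [hu, hW1]
      · simp [hu, Function.update_of_ne hik, hV]
    · rw [← Finset.add_sum_erase _ _ (Finset.mem_univ k₀)]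
      have e1 : blkP α k₀ (u k₀) = r := by simp [hu, hW2]
      have e2 : ∑ k ∈ Finset.univ.erase k₀, blkP α k (u k)
          = ∑ k ∈ Finset.univ.erase k₀, blkP α k (V (z k)) := by
        refine Finset.sum_congr rfl fun k hk => ?_
        rw [hu, Function.update_of_ne (Finset.ne_of_mem_erase hk)]
      rw [e1, e2, hr]
      ring
  · by_cases hS : ∃ k₀, blkA α k₀ ≠ 0
    · obtain ⟨k₀, hk₀⟩ := hS
      have hQ : ∀ k : Fin n, ∃ d e : ZMod 2, blkA α k ≠ 0 →
          ((∀ v, blkP α k v = d → f v = e) ∧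
            (∀ c, ∃ v, blkP α k v = d + 1 ∧ f v = c)) := by
        intro k
        by_cases hk : blkA α k ≠ 0
        · rcases dichot h1 h2 (blkA α k) hk with hsurj | ⟨d, e, hde⟩
          · exact absurd ⟨k, hk, hsurj⟩ hA
          · exact ⟨d, e, fun _ => hde⟩
        · exact ⟨0, 0, fun h => absurd h hk⟩
      choose D E hDE using hQ
      have hfree : ∀ k, blkA α k ≠ 0 → ∀ c, ∃ v, blkP α k v = D k + 1 ∧ f v = c :=
        fun k hk => (hDE k hk).2
      have hbase : ∀ (k : Fin n) (c : ZMod 2), ∃ v, f v = c ∧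
          blkP α k v = (if blkA α k = 0 then 0 else D k + 1) := by
        intro k c
        by_cases hk : blkA α k = 0
        · refine ⟨V c, hV c, ?_⟩
          simp [blkP, hk]
        · obtain ⟨v, hv1, hv2⟩ := hfree k hk c
          exact ⟨v, hv2, by simp [hk, hv1]⟩
      choose B hB1 hB2 using hbase
      set s₀ : ZMod 2 :=
        ∑ k ∈ Finset.univ.erase k₀, (if blkA α k = 0 then 0 else D k + 1) with hs₀
      have mainsum : ∀ (z : Fin n → ZMod 2) (v₀ : Fin n → ZMod 2),
          ∑ i, blkP α i (Function.update (fun k => B k (z k)) k₀ v₀ i)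
            = blkP α k₀ v₀ + s₀ := by
        intro z v₀
        rw [← Finset.add_sum_erase _ _ (Finset.mem_univ k₀)]
        congr 1
        · rw [Function.update_self]
        · rw [hs₀]
          refine Finset.sum_congr rfl fun k hk => ?_
          rw [Function.update_of_ne (Finset.ne_of_mem_erase hk)]
          exact hB2 k (z k)
      have mainval : ∀ (z : Fin n → ZMod 2) (v₀ : Fin n → ZMod 2), f v₀ = z k₀ →
          ∀ i, f (Function.update (fun k => B k (z k)) k₀ v₀ i) = z i := by
        intro z v₀ hv₀ i
        by_cases hik : i = k₀
        · subst hik; rw [Function.update_self]; exact hv₀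
        · rw [Function.update_of_ne hik]; exact hB1 i (z i)
      by_cases hp : b - s₀ = D k₀ + 1
      · refine ⟨k₀, 0, fun z _ => ?_⟩
        obtain ⟨v₀, hv₀p, hv₀f⟩ := hfree k₀ hk₀ (z k₀)
        refine ⟨Function.update (fun k => B k (z k)) k₀ v₀, mainval z v₀ hv₀f, ?_⟩
        rw [mainsum z v₀, hv₀p, ← hp]
        ring
      · have hp' : b - s₀ = D k₀ := by
          rcases zcases (b - s₀) (D k₀) with h | h
          · exact h
          · exact absurd h hp
        obtain ⟨v₀, hv₀p0⟩ := psolve hk₀ (D k₀)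
        have hv₀p : blkP α k₀ v₀ = D k₀ := hv₀p0
        have hv₀f : f v₀ = E k₀ := (hDE k₀ hk₀).1 v₀ hv₀p
        refine ⟨k₀, E k₀, fun z hz => ?_⟩
        refine ⟨Function.update (fun k => B k (z k)) k₀ v₀,
          mainval z v₀ (by rw [hv₀f, hz]), ?_⟩
        rw [mainsum z v₀, hv₀p, ← hp']
        ring
    · push_neg at hS
      have hzero : ∀ (i : Fin n) (v : Fin n → ZMod 2), blkP α i v = 0 := by
        intro i v
        have : blkA α i = 0 := hS i
        simp [blkP, this]
      have hb : b = 0 := by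
        obtain ⟨y0, hy0⟩ := hw
        rw [← hy0, sum_blocks]
        simp [hzero]
      refine ⟨⟨0, hn⟩, 0, fun z _ => ?_⟩
      refine ⟨fun k => V (z k), fun i => hV (z i), ?_⟩
      simp [hzero, hb]

lemma key (h1 : ¬ IsAffine f) (h2 : 2 ≤ Cmin f)
    (α : Fin (n * n) → ZMod 2) (b : ZMod 2)
    (hw : ∃ y0 : Fin (n * n) → ZMod 2, ∑ m, α m * y0 m = b) :
    ∃ y y' : Fin (n * n) → ZMod 2,
      (∑ m, α m * y m = b) ∧ (∑ m, α m * y' m = b) ∧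
        compose f f y ≠ compose f f y' := by
  obtain ⟨k₀, e₀, hcore⟩ := core h1 h2 α b hw
  obtain ⟨z, hzk, hz0⟩ := L2 h2 k₀ e₀ 0
  obtain ⟨z', hzk', hz1⟩ := L2 h2 k₀ e₀ 1
  obtain ⟨u, hu, hus⟩ := hcore z hzk
  obtain ⟨u', hu', hus'⟩ := hcore z' hzk'
  refine ⟨mkBlocks u, mkBlocks u', ?_, ?_, ?_⟩
  · rw [sum_mkBlocks]; exact hus
  · rw [sum_mkBlocks]; exact hus'
  · rw [compose_mkBlocks, compose_mkBlocks]
    have e1 : (fun i => f (u i)) = z := funext hu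
    have e2 : (fun i => f (u' i)) = z' := funext hu'
    rw [e1, e2, hz0, hz1]
    decide

end Core

/-- if `f` is not affine and `C_min[f] ≥ 2`, then `C⊕_min[f ∘ f] ≥ 2`. -/
theorem stmt9 {n : ℕ} (f : (Fin n → ZMod 2) → ZMod 2) (h1 : ¬ IsAffine f)
    (h2 : 2 ≤ Cmin f) :
    2 ≤ pCmin (compose f f) := by
  classical
  refine le_ciInf fun x => ?_
  have hne : {d | ∃ (α : Fin d → Fin (n * n) → ZMod 2) (b : Fin d → ZMod 2),
      x ∈ affSol d α b ∧ ConstOn (compose f f) (affSol d α b)}.Nonempty := by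
    refine ⟨n * n, fun j i => if i = j then 1 else 0, fun j => x j, ?_, ?_⟩
    · intro j
      have : ∀ i : Fin (n * n), (if i = j then (1 : ZMod 2) else 0) * x i
          = if i = j then x i else 0 := by intro i; split <;> simp
      rw [Finset.sum_congr rfl (fun i _ => this i), Finset.sum_ite_eq' Finset.univ j]
      simp
    · refine ⟨compose f f x, fun y hy => ?_⟩
      have hyx : y = x := by
        funext j
        have := hy j
        have h2' : ∀ i : Fin (n * n), (if i = j then (1 : ZMod 2) else 0) * y i
            = if i = j then y i else 0 := by intro i; split <;> simp
        rw [Finset.sum_congr rfl (fun i _ => h2' i),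
          Finset.sum_ite_eq' Finset.univ j] at this
        simpa using this
      rw [hyx]
  have hmem := Nat.sInf_mem hne
  rw [pC] at *
  by_contra hlt
  push_neg at hlt
  interval_cases h : sInf {d | ∃ (α : Fin d → Fin (n * n) → ZMod 2) (b : Fin d → ZMod 2),
      x ∈ affSol d α b ∧ ConstOn (compose f f) (affSol d α b)}
  · obtain ⟨α', b', -, c, hc⟩ := hmem
    obtain ⟨y, y', -, -, hne'⟩ := key h1 h2 (fun _ => 0) 0 ⟨fun _ => 0, by simp⟩
    have m1 : y ∈ affSol 0 α' b' := fun j => j.elim0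
    have m2 : y' ∈ affSol 0 α' b' := fun j => j.elim0
    exact hne' ((hc y m1).trans (hc y' m2).symm)
  · obtain ⟨α', b', hx, c, hc⟩ := hmem
    obtain ⟨y, y', hy, hy', hne'⟩ := key h1 h2 (α' 0) (b' 0) ⟨x, hx 0⟩
    have m1 : y ∈ affSol 1 α' b' := by
      intro j
      rw [Fin.fin_one_eq_zero j]
      exact hy
    have m2 : y' ∈ affSol 1 α' b' := by
      intro j
      rw [Fin.fin_one_eq_zero j]
      exact hy'
    exact hne' ((hc y m1).trans (hc y' m2).symm)


end Paper
end

section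
/- If a Boolean function f : {−1,1}^n → {−1,1} is computed by a real multilinear polynomial of degree d, then every Fourier coefficient of f is an integer multiple of 2^{−d} (2^{−d}-granularity). -/
open Finset

namespace Paper

lemma sum_supersets_prod {n : ℕ} (T : Finset (Fin n)) (a : Fin n → ℝ) :
    ∑ S ∈ Finset.univ.filter (fun S => T ⊆ S), ∏ i ∈ S, a i
      = (∏ i ∈ T, a i) * ∏ i ∈ Tᶜ, (1 + a i) := by
  have h1 : ∀ i ∈ Tᶜ, (1 + a i) = (a i + 1) := fun i _ => add_comm _ _
  rw [Finset.prod_congr rfl h1, Finset.prod_add]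
  simp only [Finset.prod_const_one, mul_one]
  rw [Finset.mul_sum]
  refine Finset.sum_nbij' (fun S => S \ T) (fun V => T ∪ V) ?_ ?_ ?_ ?_ ?_
  · intro S hS
    simp only [Finset.mem_filter] at hS
    simp only [Finset.mem_powerset]
    intro i hi
    simp only [Finset.mem_sdiff] at hi
    simp [hi.2]
  · intro V hV
    simp only [Finset.mem_powerset] at hV
    simp
  · intro S hS
    simp only [Finset.mem_filter] at hS
    exact Finset.union_sdiff_of_subset hS.2
  · intro V hV
    simp only [Finset.mem_powerset] at hV
    refine Finset.union_sdiff_cancel_left (Finset.disjoint_left.mpr ?_)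
    intro i hiT hiV
    have := hV hiV
    simp [hiT] at this
  · intro S hS
    simp only [Finset.mem_filter] at hS
    rw [← Finset.prod_sdiff hS.2, mul_comm]

lemma int_sum {n : ℕ} (f : (Fin n → Bool) → ℝ) (hb : ∀ x, f x = 1 ∨ f x = -1)
    (T : Finset (Fin n)) :
    ∃ m : ℤ, (∑ U ∈ T.powerset, (-1 : ℝ) ^ U.card * f (fun i => decide (i ∈ U))) = (m : ℝ) := by
  refine ⟨∑ U ∈ T.powerset, (-1 : ℤ) ^ U.card *
    (if f (fun i => decide (i ∈ U)) = 1 then 1 else -1), ?_⟩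
  push_cast
  refine Finset.sum_congr rfl fun U _ => ?_
  rcases hb (fun i => decide (i ∈ U)) with h | h
  · simp [h]
  · rw [h]; norm_num


lemma prod_one_add_toPM {n : ℕ} (T : Finset (Fin n)) (x : Fin n → Bool) :
    ∏ i ∈ Tᶜ, (1 + toPM (x i))
      = if ∀ i ∈ Tᶜ, x i = false then (2 : ℝ) ^ (Tᶜ.card) else 0 := by
  have h1 : ∀ i ∈ Tᶜ, (1 + toPM (x i)) = if x i then (0:ℝ) else 2 := by
    intro i _
    unfold toPM
    cases x i <;> norm_num
  rw [Finset.prod_congr rfl h1]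
  by_cases h : ∀ i ∈ Tᶜ, x i = false
  · rw [if_pos h]
    have h2 : ∀ i ∈ Tᶜ, (if x i = true then (0:ℝ) else 2) = 2 := fun i hi => by
      rw [h i hi]; norm_num
    rw [Finset.prod_congr rfl h2, Finset.prod_const]
  · rw [if_neg h]
    push_neg at h
    obtain ⟨i, hi, hxi⟩ := h
    exact Finset.prod_eq_zero hi (by simp [hxi])

lemma key_s11 {n : ℕ} (f : (Fin n → Bool) → ℝ) (T : Finset (Fin n)) :
    ∑ S ∈ Finset.univ.filter (fun S => T ⊆ S), fourier f S
      = (∑ U ∈ T.powerset, (-1 : ℝ) ^ U.card * f (fun i => decide (i ∈ U))) / 2 ^ T.card := by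
  have hTn : T.card ≤ n := by simpa using Finset.card_le_card (Finset.subset_univ T)
  have hcompl : Tᶜ.card = n - T.card := by simp [Finset.card_compl]
  unfold fourier
  rw [← Finset.sum_div, Finset.sum_comm]
  have hnum : ∑ x : Fin n → Bool, ∑ S ∈ Finset.univ.filter (fun S => T ⊆ S),
        f x * ∏ i ∈ S, toPM (x i)
      = (∑ U ∈ T.powerset, (-1 : ℝ) ^ U.card * f (fun i => decide (i ∈ U))) * 2 ^ (n - T.card) := by
    have h2 : ∀ x : Fin n → Bool, ∑ S ∈ Finset.univ.filter (fun S => T ⊆ S),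
        f x * ∏ i ∈ S, toPM (x i)
        = if ∀ i ∈ Tᶜ, x i = false then
            f x * (∏ i ∈ T, toPM (x i)) * 2 ^ (n - T.card) else 0 := by
      intro x
      rw [← Finset.mul_sum, sum_supersets_prod, prod_one_add_toPM, hcompl]
      by_cases h : ∀ i ∈ Tᶜ, x i = false
      · rw [if_pos h, if_pos h]; ring
      · rw [if_neg h, if_neg h]; ring
    rw [Finset.sum_congr rfl (fun x _ => h2 x), Finset.sum_ite, Finset.sum_const_zero, add_zero,
      Finset.sum_mul]
    refine Finset.sum_nbij' (fun x => T.filter (fun i => x i = true))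
      (fun U => fun i => decide (i ∈ U)) ?_ ?_ ?_ ?_ ?_
    · intro x _
      simp only [Finset.mem_powerset]
      exact Finset.filter_subset _ _
    · intro U hU
      simp only [Finset.mem_powerset] at hU
      simp only [Finset.mem_filter, Finset.mem_univ, true_and]
      intro i hi
      simp only [Finset.mem_compl] at hi
      have hnot : i ∉ U := fun h => hi (hU h)
      simp [hnot]
    · intro x hx
      simp only [Finset.mem_filter, Finset.mem_univ, true_and] at hx
      funext i
      by_cases hxi : x i = true
      · have hiT : i ∈ T := by
          by_contra hiT
          have := hx i (Finset.mem_compl.mpr hiT)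
          rw [this] at hxi; exact Bool.false_ne_true hxi
        simp [hxi, hiT]
      · simp only [Bool.not_eq_true] at hxi
        simp [hxi, Finset.mem_filter]
    · intro U hU
      simp only [Finset.mem_powerset] at hU
      ext i
      simp only [Finset.mem_filter, decide_eq_true_eq]
      exact ⟨fun h => h.2, fun h => ⟨hU h, h⟩⟩
    · intro x hx
      simp only [Finset.mem_filter, Finset.mem_univ, true_and] at hx
      have hxeq : (fun i => decide (i ∈ T.filter (fun i => x i = true))) = x := by
        funext i
        by_cases hxi : x i = true
        · have hiT : i ∈ T := by
            by_contra hiT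
            have := hx i (Finset.mem_compl.mpr hiT)
            rw [this] at hxi; exact Bool.false_ne_true hxi
          simp [hxi, hiT]
        · simp only [Bool.not_eq_true] at hxi
          simp [hxi, Finset.mem_filter]
      rw [hxeq]
      have hprod : ∏ i ∈ T, toPM (x i) = (-1 : ℝ) ^ (T.filter (fun i => x i = true)).card := by
        have : ∀ i ∈ T, toPM (x i) = if x i = true then (-1:ℝ) else 1 := by
          intro i _
          unfold toPM
          cases x i <;> simp
        rw [Finset.prod_congr rfl this, Finset.prod_ite, Finset.prod_const, Finset.prod_const,
          one_pow, mul_one]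
      rw [hprod]
      ring
  rw [hnum]
  have hpow : (2:ℝ) ^ n = 2 ^ (n - T.card) * 2 ^ T.card := by rw [← pow_add]; congr 1; omega
  rw [hpow, ← div_div, mul_div_cancel_right₀ _ (by positivity : ((2:ℝ) ^ (n - T.card)) ≠ 0)]


lemma aux_split {n : ℕ} (S : Finset (Fin n)) :
    Finset.univ.filter (fun S' => S ⊆ S') = insert S (Finset.univ.filter (fun S' => S ⊂ S')) := by
  ext S'
  simp only [Finset.mem_filter, Finset.mem_insert, Finset.mem_univ, true_and]
  constructor
  · intro h
    rcases eq_or_ne S' S with rfl | hne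
    · exact Or.inl rfl
    · exact Or.inr (Finset.ssubset_iff_subset_ne.mpr ⟨h, hne.symm⟩)
  · rintro (rfl | h)
    · exact Finset.Subset.refl _
    · exact h.subset

/-- a degree-`d` Boolean function has `2^{-d}`-granular Fourier coefficients. -/
theorem stmt11 {n d : ℕ} (f : (Fin n → Bool) → ℝ)
    (hb : ∀ x, f x = 1 ∨ f x = -1)
    (hd : ∀ S : Finset (Fin n), d < S.card → fourier f S = 0) :
    ∀ S : Finset (Fin n), ∃ m : ℤ, fourier f S = (m : ℝ) / 2 ^ d := by
  have key2 : ∀ T : Finset (Fin n), ∃ c : ℤ,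
      ∑ S ∈ Finset.univ.filter (fun S' => T ⊆ S'), fourier f S = (c : ℝ) / 2 ^ T.card := by
    intro T
    obtain ⟨c, hc⟩ := int_sum f hb T
    exact ⟨c, by rw [key_s11 f T, hc]⟩
  suffices H : ∀ k : ℕ, ∀ S : Finset (Fin n), n - S.card ≤ k →
      ∃ m : ℤ, fourier f S = (m : ℝ) / 2 ^ d from
    fun S => H n S (Nat.sub_le _ _)
  intro k
  induction k using Nat.strong_induction_on with
  | _ k IH =>
  intro S hS
  rcases lt_or_ge d S.card with hlt | hle
  · exact ⟨0, by rw [hd S hlt]; simp⟩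
  obtain ⟨c, hc⟩ := key2 S
  have hSnot : S ∉ Finset.univ.filter (fun S' => S ⊂ S') := by
    simp only [Finset.mem_filter]
    exact fun h => (ssubset_irrefl S) h.2
  have hsum : fourier f S = (c : ℝ) / 2 ^ S.card
      - ∑ S' ∈ Finset.univ.filter (fun S' => S ⊂ S'), fourier f S' := by
    rw [← hc, aux_split S, Finset.sum_insert hSnot]; ring
  have IH' : ∀ S' : Finset (Fin n), S ⊂ S' → ∃ m : ℤ, fourier f S' = (m : ℝ) / 2 ^ d := by
    intro S' hss
    have h1 : S'.card ≤ n := by simpa using Finset.card_le_card (Finset.subset_univ S')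
    have h2 : S.card < S'.card := Finset.card_lt_card hss
    exact IH (n - S'.card) (by omega) S' le_rfl
  choose! M hM using IH'
  refine ⟨c * 2 ^ (d - S.card) - ∑ S' ∈ Finset.univ.filter (fun S' => S ⊂ S'), M S', ?_⟩
  have h2 : ∑ S' ∈ Finset.univ.filter (fun S' => S ⊂ S'), fourier f S'
      = ((∑ S' ∈ Finset.univ.filter (fun S' => S ⊂ S'), M S' : ℤ) : ℝ) / 2 ^ d := by
    push_cast
    rw [Finset.sum_div]
    exact Finset.sum_congr rfl fun S' hS' => hM S' (by simpa using hS')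
  rw [hsum, h2]
  have hpow : (2 : ℝ) ^ d = 2 ^ S.card * 2 ^ (d - S.card) := by rw [← pow_add]; congr 1; omega
  push_cast
  rw [hpow]
  have e1 : ((2:ℝ) ^ S.card) ≠ 0 := by positivity
  have e2 : ((2:ℝ) ^ (d - S.card)) ≠ 0 := by positivity
  field_simp


end Paper
end

section
/- If a Boolean function f : {−1,1}^n → {−1,1} has degree d as a multilinear polynomial, then its Fourier sparsity (number of nonzero Fourier coefficients) is at most 4^d. -/
open Finset

namespace Paper

/-!
The Fourier coefficients of a degree-`d` Boolean function all lie in `2^{-d} ℤ`. Indeed, the sum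
of `f̂(T)` over the supersets `T` of `S` is an average of `±1` values over the `2^{|S|}` points of
a subcube, so `f̂(S)` lies in `2^{-|S|} ℤ` modulo the coefficients of strictly larger sets, which
vanish above degree `d`; downward induction on `|S|` does the rest. Every nonzero coefficient
therefore contributes at least `4^{-d}` to Parseval's identity `∑ f̂(S)^2 = 1`.
-/

noncomputable def chi {n : ℕ} (S : Finset (Fin n)) (x : Fin n → Bool) : ℝ :=
  ∏ i ∈ S, toPM (x i)

section FourierCoefficients

variable {n : ℕ}

lemma fourier_eq_sum_mul_chi (f : (Fin n → Bool) → ℝ) (S : Finset (Fin n)) :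
    fourier f S = (∑ x, f x * chi S x) / 2 ^ n := rfl

lemma toPM_mul_toPM (a b : Bool) : toPM a * toPM b = toPM (xor a b) := by
  cases a <;> cases b <;> norm_num [toPM]

lemma toPM_add_one (b : Bool) : toPM b + 1 = if b = false then 2 else 0 := by
  cases b <;> norm_num [toPM]

lemma chi_mul_chi (S : Finset (Fin n)) (x y : Fin n → Bool) :
    chi S x * chi S y = chi S fun i => xor (x i) (y i) := by
  simp only [chi, ← prod_mul_distrib, toPM_mul_toPM]

lemma chi_union_of_disjoint {S U : Finset (Fin n)} (h : Disjoint S U) (x : Fin n → Bool) :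
    chi (S ∪ U) x = chi S x * chi U x :=
  prod_union h

lemma chi_eq_one_or_neg_one (S : Finset (Fin n)) (x : Fin n → Bool) :
    chi S x = 1 ∨ chi S x = -1 := by
  rw [← mul_self_eq_one_iff, chi_mul_chi]
  simp [chi, toPM]

lemma sum_powerset_chi (R : Finset (Fin n)) (x : Fin n → Bool) :
    ∑ U ∈ R.powerset, chi U x = if ∀ i ∈ R, x i = false then 2 ^ R.card else 0 := by
  simp_rw [chi, ← prod_add_one, toPM_add_one]
  split_ifs with h
  · rw [prod_congr rfl fun i hi => if_pos (h i hi), prod_const]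
  · push Not at h
    obtain ⟨i, hi, hxi⟩ := h
    exact prod_eq_zero hi (if_neg hxi)

lemma sum_chi_mul_chi (x y : Fin n → Bool) :
    ∑ S, chi S x * chi S y = if x = y then 2 ^ n else 0 := by
  simp_rw [chi_mul_chi, ← powerset_univ, sum_powerset_chi, card_univ, Fintype.card_fin]
  congr 1
  simp [funext_iff]

theorem sum_fourier_sq (f : (Fin n → Bool) → ℝ) :
    ∑ S, fourier f S ^ 2 = (∑ x, f x ^ 2) / 2 ^ n := by
  calc ∑ S, fourier f S ^ 2
      = (∑ x, ∑ y, f x * f y * ∑ S, chi S x * chi S y) / (2 ^ n) ^ 2 := by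
        simp_rw [fourier_eq_sum_mul_chi, div_pow, ← sum_div, sq, sum_mul_sum, mul_sum]
        rw [sum_comm]
        refine congrArg (· / _) (sum_congr rfl fun x _ => ?_)
        rw [sum_comm]
        exact sum_congr rfl fun y _ => sum_congr rfl fun S _ => by ring
    _ = (∑ x, f x ^ 2) / 2 ^ n := by
        simp_rw [sum_chi_mul_chi, mul_ite, mul_zero, sum_ite_eq, mem_univ, if_true, ← sum_mul]
        field_simp

theorem sum_fourier_sq_eq_one {f : (Fin n → Bool) → ℝ} (hf : ∀ x, f x = 1 ∨ f x = -1) :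
    ∑ S, fourier f S ^ 2 = 1 := by
  have hsq : ∀ x, f x ^ 2 = 1 := fun x => by rcases hf x with h | h <;> simp [h]
  simp [sum_fourier_sq, hsq]

/-- Summing the coefficients over all supersets of `S` gives the `S`-coefficient of the
restriction of `f` to the subcube where every coordinate outside `S` is fixed. -/
theorem sum_powerset_compl_fourier_union (f : (Fin n → Bool) → ℝ) (S : Finset (Fin n)) :
    ∑ U ∈ Sᶜ.powerset, fourier f (S ∪ U) =
      (∑ x with ∀ i ∈ Sᶜ, x i = false, f x * chi S x) / 2 ^ S.card := by
  have hchi : ∀ x, ∑ U ∈ Sᶜ.powerset, chi (S ∪ U) x =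
      chi S x * if ∀ i ∈ Sᶜ, x i = false then 2 ^ Sᶜ.card else 0 := fun x => by
    rw [← sum_powerset_chi, mul_sum]
    exact sum_congr rfl fun U hU =>
      chi_union_of_disjoint (disjoint_compl_right.mono_right (mem_powerset.mp hU)) x
  have hcard : (2 : ℝ) ^ n = 2 ^ S.card * 2 ^ Sᶜ.card := by
    rw [← pow_add, card_add_card_compl, Fintype.card_fin]
  simp_rw [fourier_eq_sum_mul_chi, ← sum_div]
  rw [sum_comm]
  simp_rw [← mul_sum, hchi, sum_filter, mul_ite, mul_zero, ← mul_assoc, ← ite_zero_mul, ← sum_mul,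
    hcard]
  exact mul_div_mul_right _ _ (by positivity)

lemma intCast_div_two_pow_mem_zmultiples (m : ℤ) {k d : ℕ} (hkd : k ≤ d) :
    (m : ℝ) / 2 ^ k ∈ AddSubgroup.zmultiples ((2 : ℝ) ^ d)⁻¹ := by
  obtain ⟨j, rfl⟩ := Nat.exists_eq_add_of_le hkd
  refine AddSubgroup.mem_zmultiples_iff.mpr ⟨m * 2 ^ j, ?_⟩
  rw [zsmul_eq_mul, pow_add]
  push_cast
  field_simp

theorem fourier_mem_zmultiples {d : ℕ} {f : (Fin n → Bool) → ℝ} (hf : ∀ x, ∃ m : ℤ, f x = m)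
    (hd : ∀ S : Finset (Fin n), d < S.card → fourier f S = 0) (S : Finset (Fin n)) :
    fourier f S ∈ AddSubgroup.zmultiples ((2 : ℝ) ^ d)⁻¹ := by
  by_cases hS : d < S.card
  · rw [hd S hS]
    exact zero_mem _
  refine Finset.strongDownwardInduction (p := fun S => fourier f S ∈ _) (n := d)
    (fun S ih hSd => ?_) S (not_lt.mp hS)
  have hsplit := sum_powerset_compl_fourier_union f S
  rw [← add_sum_erase _ _ (empty_mem_powerset _), union_empty] at hsplit
  rw [eq_sub_of_add_eq hsplit]
  refine sub_mem ?_ (sum_mem fun U hU => ?_)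
  · rw [sum_div]
    refine sum_mem fun x _ => ?_
    obtain ⟨m, hm⟩ := hf x
    rcases chi_eq_one_or_neg_one S x with h | h
    · simpa [hm, h] using intCast_div_two_pow_mem_zmultiples m hSd
    · simpa [hm, h] using intCast_div_two_pow_mem_zmultiples (-m) hSd
  · by_cases hSU : d < (S ∪ U).card
    · rw [hd _ hSU]
      exact zero_mem _
    obtain ⟨hUne, hU⟩ := mem_erase.mp hU
    refine ih (not_lt.mp hSU) (left_lt_sup.mpr fun hUS => hUne ?_)
    exact subset_empty.mp fun i hi => absurd (hUS hi) (mem_compl.mp (mem_powerset.mp hU hi))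

end FourierCoefficients

lemma sq_le_sq_of_mem_zmultiples {a c : ℝ} (ha : a ∈ AddSubgroup.zmultiples c) (ha0 : a ≠ 0) :
    c ^ 2 ≤ a ^ 2 := by
  obtain ⟨k, rfl⟩ := AddSubgroup.mem_zmultiples_iff.mp ha
  have hk : (1 : ℝ) ≤ (k : ℝ) ^ 2 := by
    have : k ≠ 0 := by rintro rfl; simp at ha0
    exact one_le_sq_iff_one_le_abs _ |>.mpr (by exact_mod_cast Int.one_le_abs this)
  rw [zsmul_eq_mul, mul_pow]
  exact le_mul_of_one_le_left (sq_nonneg c) hk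

theorem card_ne_zero_mul_sq_le_sum_sq {ι : Type*} [Fintype ι] (a : ι → ℝ) {c : ℝ}
    (ha : ∀ i, a i ∈ AddSubgroup.zmultiples c) :
    (#{i | a i ≠ 0} : ℝ) * c ^ 2 ≤ ∑ i, a i ^ 2 := by
  classical
  calc (#{i | a i ≠ 0} : ℝ) * c ^ 2 = ∑ i with a i ≠ 0, c ^ 2 := by
        rw [sum_const, nsmul_eq_mul]
    _ ≤ ∑ i with a i ≠ 0, a i ^ 2 :=
        sum_le_sum fun i hi => sq_le_sq_of_mem_zmultiples (ha i) (mem_filter.mp hi).2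
    _ ≤ ∑ i, a i ^ 2 := sum_le_sum_of_subset_of_nonneg (subset_univ _) fun i _ _ => sq_nonneg _

/-- a degree-`d` Boolean function has Fourier sparsity at most `4^d`. -/
theorem stmt12 {n d : ℕ} (f : (Fin n → Bool) → ℝ)
    (hb : ∀ x, f x = 1 ∨ f x = -1)
    (hd : ∀ S : Finset (Fin n), d < S.card → fourier f S = 0) :
    Set.ncard {S : Finset (Fin n) | fourier f S ≠ 0} ≤ 4 ^ d := by
  classical
  have hint : ∀ x, ∃ m : ℤ, f x = m := fun x => (hb x).elim
    (fun h => ⟨1, by simp [h]⟩) (fun h => ⟨-1, by simp [h]⟩)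
  have hcount := card_ne_zero_mul_sq_le_sum_sq (fourier f) (fourier_mem_zmultiples hint hd)
  rw [sum_fourier_sq_eq_one hb, inv_pow, ← pow_mul, mul_comm d, pow_mul,
    mul_inv_le_iff₀ (by positivity), one_mul] at hcount
  rw [← coe_filter_univ, Set.ncard_coe_finset]
  norm_num at hcount
  exact_mod_cast hcount

end Paper
end

section
/- The Sort function has C^⊕_min[Sort] = 2: there is an affine subspace of F_2^4 of codimension 2 on which Sort is constant, but Sort is non-constant on every affine subspace of codimension at most 1. -/
open Finset

namespace Paper

lemma sort_key : ∀ α : Fin 4 → ZMod 2, ∀ b : ZMod 2,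
    (∃ x : Fin 4 → ZMod 2, ∑ i, α i * x i = b) →
    ∃ y z : Fin 4 → ZMod 2, (∑ i, α i * y i = b) ∧ (∑ i, α i * z i = b) ∧
      sortF y = 0 ∧ sortF z = 1 := by decide

lemma sort_const2 :
    ConstOn sortF (affSol 2 ![![1,1,0,0],![0,0,1,1]] ![1,1]) := by
  simp only [ConstOn, affSol, Set.mem_setOf_eq]
  decide

/-- `C⊕_min[Sort] = 2`. -/
theorem stmt16 : pCmin sortF = 2 := by
  apply le_antisymm
  · refine le_trans (ciInf_le (OrderBot.bddBelow _) ![0,1,0,1]) ?_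
    apply Nat.sInf_le
    refine ⟨![![1,1,0,0],![0,0,1,1]], ![1,1], ?_, sort_const2⟩
    simp only [affSol, Set.mem_setOf_eq]
    decide
  · apply le_ciInf
    intro x
    apply le_csInf
    · refine ⟨4, fun j i => if i = j then 1 else 0, fun j => x j, ?_, sortF x, ?_⟩
      · intro j
        simp [Finset.sum_ite_eq']
      · intro y hy
        have hyx : y = x := by
          funext j
          have := hy j
          simpa [Finset.sum_ite_eq'] using this
        rw [hyx]
    · rintro d ⟨α, b, hx, c, hc⟩
      by_contra hlt
      push_neg at hlt
      interval_cases d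
      · have h0 : sortF ![0,0,0,0] = c := hc _ (fun j => j.elim0)
        have h1 : sortF ![0,1,0,1] = c := hc _ (fun j => j.elim0)
        have e0 : sortF ![0,0,0,0] = 1 := by decide
        have e1 : sortF ![0,1,0,1] = 0 := by decide
        rw [e0] at h0; rw [e1] at h1
        exact absurd (h0.trans h1.symm) (by decide)
      · simp only [affSol, Set.mem_setOf_eq] at hx
        obtain ⟨y, z, hy, hz, hy0, hz1⟩ := sort_key (α 0) (b 0) ⟨x, hx 0⟩
        have h0 : sortF y = c := hc y (fun j => by fin_cases j; exact hy)
        have h1 : sortF z = c := hc z (fun j => by fin_cases j; exact hz)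
        rw [hy0] at h0; rw [hz1] at h1
        exact absurd (h0.trans h1.symm) (by decide)

end Paper
end
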